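/- Let f be a finite product f(z) = c·∏ᵢ (aᵢ z + 1)/(z + aᵢ) with c ∈ {-1, 1}, each aᵢ real with |aᵢ| < 1. Then for every ω_p ∈ (0, π), the phase change rate satisfies θ_f'(ω_p) ≤ -|sin(θ_f(ω_p))| / sin(ω_p), with equality when the product has zero or one factor. -/

import Mathlib

/-!
On the unit circle each factor `(a z + 1)/(z + a)` has modulus one, and its imaginary part is
`(a² - 1) Im z / |z + a|²`. Hence at `z = e^{jω}` the phase derivative of the factor equals
`sin θᵢ / sin ω`, where `θᵢ` is its phase and `sin θᵢ ≤ 0`. The inequality is then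
subadditivity of `|sin|` over the sum `Σ θᵢ`, and `c = ±1` shifts the phase by `0` or `π`,
which leaves `|sin|` unchanged.
-/

open Real Complex

namespace Complex

theorem norm_ofReal_mul_add_one_of_norm_eq_one {z : ℂ} (hz : ‖z‖ = 1) (a : ℝ) :
    ‖(a : ℂ) * z + 1‖ = ‖z + a‖ := by
  have hzz : z * (starRingEnd ℂ) z = 1 := by
    rw [mul_conj, normSq_eq_norm_sq, hz]; norm_num
  calc ‖(a : ℂ) * z + 1‖ = ‖z * (a + (starRingEnd ℂ) z)‖ := by
        rw [mul_add, hzz]; ring_nf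
    _ = ‖z + a‖ := by
        rw [norm_mul, hz, one_mul, ← norm_conj, map_add, conj_conj, conj_ofReal, add_comm]

theorem im_ofReal_mul_add_one_div_add (z : ℂ) (a : ℝ) :
    (((a : ℂ) * z + 1) / (z + a)).im = (a ^ 2 - 1) * z.im / ‖z + a‖ ^ 2 := by
  rw [div_im, Complex.sq_norm, normSq_apply]
  simp only [add_re, add_im, mul_re, mul_im, ofReal_re, ofReal_im, one_re, one_im]
  ring

theorem sin_arg_ofReal_mul_add_one_div_add {z : ℂ} (hz : ‖z‖ = 1) (a : ℝ) :
    Real.sin (arg (((a : ℂ) * z + 1) / (z + a))) = (a ^ 2 - 1) * z.im / ‖z + a‖ ^ 2 := by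
  rcases eq_or_ne (z + a) 0 with h | h
  · simp [h]
  · rw [sin_arg, norm_div, norm_ofReal_mul_add_one_of_norm_eq_one hz,
      div_self (norm_ne_zero_iff.mpr h), div_one, im_ofReal_mul_add_one_div_add]

end Complex

theorem Real.abs_sin_sum_le_sum_abs_sin {ι : Type*} (s : Finset ι) (x : ι → ℝ) :
    |Real.sin (∑ i ∈ s, x i)| ≤ ∑ i ∈ s, |Real.sin (x i)| := by
  induction s using Finset.cons_induction with
  | empty => simp
  | cons i s hi ih =>
    rw [Finset.sum_cons, Finset.sum_cons, Real.sin_add]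
    calc |Real.sin (x i) * Real.cos (∑ j ∈ s, x j) + Real.cos (x i) * Real.sin (∑ j ∈ s, x j)|
        ≤ |Real.sin (x i)| * |Real.cos (∑ j ∈ s, x j)|
            + |Real.cos (x i)| * |Real.sin (∑ j ∈ s, x j)| := by
          rw [← abs_mul, ← abs_mul]; exact abs_add_le _ _
      _ ≤ |Real.sin (x i)| * 1 + 1 * |Real.sin (∑ j ∈ s, x j)| := by
          gcongr <;> exact abs_cos_le_one _
      _ ≤ |Real.sin (x i)| + ∑ j ∈ s, |Real.sin (x j)| := by
          rw [mul_one, one_mul]; gcongr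

theorem Real.sum_sin_le_neg_abs_sin_sum {ι : Type*} (s : Finset ι) {x : ι → ℝ}
    (hx : ∀ i ∈ s, Real.sin (x i) ≤ 0) :
    ∑ i ∈ s, Real.sin (x i) ≤ -|Real.sin (∑ i ∈ s, x i)| := by
  have hsum : ∑ i ∈ s, |Real.sin (x i)| = -∑ i ∈ s, Real.sin (x i) := by
    rw [← Finset.sum_neg_distrib]
    exact Finset.sum_congr rfl fun i hi => abs_of_nonpos (hx i hi)
  linarith [Real.abs_sin_sum_le_sum_abs_sin s x]

theorem Real.sum_sin_eq_neg_abs_sin_sum_of_card_le_one {ι : Type*} {s : Finset ι} (hs : s.card ≤ 1)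
    {x : ι → ℝ} (hx : ∀ i ∈ s, Real.sin (x i) ≤ 0) :
    ∑ i ∈ s, Real.sin (x i) = -|Real.sin (∑ i ∈ s, x i)| := by
  rcases Nat.le_one_iff_eq_zero_or_eq_one.mp hs with h | h
  · simp [Finset.card_eq_zero.mp h]
  · obtain ⟨j, rfl⟩ := Finset.card_eq_one.mp h
    simp [abs_of_nonpos (hx j (Finset.mem_singleton_self j))]

theorem abs_sin_arg_add_of_eq_one_or_eq_neg_one {c : ℝ} (hc : c = 1 ∨ c = -1) (x : ℝ) :
    |Real.sin (arg (c : ℂ) + x)| = |Real.sin x| := by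
  rcases hc with rfl | rfl
  · simp
  · rw [ofReal_neg, ofReal_one, arg_neg_one, add_comm, Real.sin_add_pi, abs_neg]

/-- `θ_f(ω_p)` is encoded as `arg c` plus the sum of the factors' arguments, and `θ_f'(ω_p)` as
the sum of the factors' phase derivatives `(aᵢ² - 1)/|e^{jω_p} + aᵢ|²`. -/
theorem stmt_5 (n : ℕ) (c : ℝ) (hc : c = 1 ∨ c = -1) (a : Fin n → ℝ)
    (ha : ∀ i, |a i| < 1) (ωp : ℝ) (hωp : ωp ∈ Set.Ioo 0 π) :
    (∑ i, ((a i) ^ 2 - 1) / ‖Complex.exp (ωp * Complex.I) + a i‖ ^ 2) ≤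
        -|Real.sin (Complex.arg (c : ℂ) +
            ∑ i, Complex.arg ((a i * Complex.exp (ωp * Complex.I) + 1) /
              (Complex.exp (ωp * Complex.I) + a i)))| / Real.sin ωp ∧
      (n ≤ 1 →
        (∑ i, ((a i) ^ 2 - 1) / ‖Complex.exp (ωp * Complex.I) + a i‖ ^ 2) =
          -|Real.sin (Complex.arg (c : ℂ) +
              ∑ i, Complex.arg ((a i * Complex.exp (ωp * Complex.I) + 1) /
                (Complex.exp (ωp * Complex.I) + a i)))| / Real.sin ωp) := by
  set z := Complex.exp (ωp * Complex.I)
  set θ : Fin n → ℝ := fun i => arg ((a i * z + 1) / (z + a i))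
  have hsin : 0 < Real.sin ωp := Real.sin_pos_of_pos_of_lt_pi hωp.1 hωp.2
  have hsin_θ (i : Fin n) : Real.sin (θ i) = (a i ^ 2 - 1) * Real.sin ωp / ‖z + a i‖ ^ 2 := by
    rw [Complex.sin_arg_ofReal_mul_add_one_div_add (norm_exp_ofReal_mul_I ωp),
      exp_ofReal_mul_I_im]
  have hθ_nonpos : ∀ i ∈ Finset.univ, Real.sin (θ i) ≤ 0 := fun i _ => by
    have : a i ^ 2 < 1 := by simpa using sq_lt_one_iff_abs_lt_one (a i) |>.mpr (ha i)
    rw [hsin_θ]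
    exact div_nonpos_of_nonpos_of_nonneg (mul_nonpos_of_nonpos_of_nonneg (by linarith) hsin.le)
      (by positivity)
  have hrate : ∑ i, (a i ^ 2 - 1) / ‖z + a i‖ ^ 2 = (∑ i, Real.sin (θ i)) / Real.sin ωp := by
    rw [Finset.sum_div]
    refine Finset.sum_congr rfl fun i _ => ?_
    rw [hsin_θ, mul_div_right_comm, mul_div_cancel_right₀ _ hsin.ne']
  rw [hrate, abs_sin_arg_add_of_eq_one_or_eq_neg_one hc]
  refine ⟨?_, fun hn => ?_⟩
  · exact div_le_div_of_nonneg_right (Real.sum_sin_le_neg_abs_sin_sum _ hθ_nonpos) hsin.le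
  · rw [Real.sum_sin_eq_neg_abs_sin_sum_of_card_le_one (by simpa using hn) hθ_nonpos]
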